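/- arXiv:1110.0341 — 2 statements merged into one kernel-verified Lean document; each statement's English description precedes it below -/
import Mathlib

section
/- Let b ≥ 1 and let T be the complete rooted tree of height h in which every non-leaf vertex has exactly b+1 children. If a fire starts at the root and at each time step at most b vertices (not yet burned) may be protected, and then the fire spreads to every unprotected neighbor of each burning vertex, then at the end of the process at least one leaf of T is burned. -/
/-- The vertices of the complete `(b+1)`-ary rooted tree of height `h` are lists over
`Fin (b+1)` of length at most `h`; the root is `[]`, children are obtained by appending
one letter, and leaves are the lists of length exactly `h`.
`burnedTree b h φ t` is the set of vertices burned at time `t` when the fire starts at the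
root and `φ t'` is the set of vertices protected at time step `t'`. -/
def burnedTree (b h : ℕ) (φ : ℕ → Finset (List (Fin (b + 1)))) : ℕ → Set (List (Fin (b + 1)))
  | 0 => {[]}
  | t + 1 => burnedTree b h φ t ∪
      {w | (∃ v ∈ burnedTree b h φ t, ∃ i : Fin (b + 1), w = v ++ [i]) ∧
            w.length ≤ h ∧ ∀ t' ≤ t + 1, w ∉ φ t'}

/-- Protected vertices of depth at most `t` placed by time `t`. -/
def Pset (b : ℕ) (φ : ℕ → Finset (List (Fin (b + 1)))) (t : ℕ) :
    Finset (List (Fin (b + 1))) :=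
  ((Finset.range (t + 1)).biUnion φ).filter (fun w => w.length ≤ t)

/-- The burned frontier at time `t` (ignoring the height cap). -/
def Bset (b : ℕ) (φ : ℕ → Finset (List (Fin (b + 1)))) : ℕ → Finset (List (Fin (b + 1)))
  | 0 => {[]}
  | t + 1 => (((Bset b φ t) ×ˢ (Finset.univ : Finset (Fin (b + 1)))).image
      (fun p => p.1 ++ [p.2])).filter (fun w => w ∉ (Finset.range (t + 2)).biUnion φ)

lemma Bset_len (b : ℕ) (φ : ℕ → Finset (List (Fin (b + 1)))) :
    ∀ t, ∀ w ∈ Bset b φ t, w.length = t := by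
  intro t
  induction t with
  | zero => intro w hw; simp only [Bset, Finset.mem_singleton] at hw; simp [hw]
  | succ t ih =>
    intro w hw
    simp only [Bset, Finset.mem_filter, Finset.mem_image, Finset.mem_product] at hw
    obtain ⟨⟨⟨v, i⟩, ⟨hv, _⟩, rfl⟩, _⟩ := hw
    simp [ih v hv]

lemma Bset_burned (b h : ℕ) (φ : ℕ → Finset (List (Fin (b + 1)))) :
    ∀ t, t ≤ h → ∀ w ∈ Bset b φ t, w ∈ burnedTree b h φ t := by
  intro t
  induction t with
  | zero =>
    intro _ w hw; simp only [Bset, Finset.mem_singleton] at hw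
    simp [burnedTree, hw]
  | succ t ih =>
    intro hth w hw
    have hlen := Bset_len b φ (t + 1) w hw
    simp only [Bset, Finset.mem_filter, Finset.mem_image, Finset.mem_product,
      Finset.mem_biUnion, Finset.mem_range, not_exists] at hw
    obtain ⟨⟨⟨v, i⟩, ⟨hv, _⟩, rfl⟩, hprot⟩ := hw
    rw [burnedTree]
    right
    refine ⟨⟨v, ih (by omega) v hv, i, rfl⟩, by omega, ?_⟩
    intro t' ht' hmem
    exact hprot t' ⟨by omega, hmem⟩

lemma Pset_mono (b : ℕ) (φ : ℕ → Finset (List (Fin (b + 1)))) (t : ℕ) :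
    Pset b φ t ⊆ Pset b φ (t + 1) := by
  intro w hw
  simp only [Pset, Finset.mem_filter, Finset.mem_biUnion, Finset.mem_range] at hw ⊢
  obtain ⟨⟨s, hs, hws⟩, hlw⟩ := hw
  exact ⟨⟨s, by omega, hws⟩, by omega⟩

lemma Pset_card (b : ℕ) (φ : ℕ → Finset (List (Fin (b + 1))))
    (hzero : φ 0 = ∅) (hcard : ∀ t, (φ t).card ≤ b) (t : ℕ) :
    (Pset b φ t).card ≤ b * t := by
  calc (Pset b φ t).card ≤ ((Finset.range (t + 1)).biUnion φ).card :=
        Finset.card_le_card (Finset.filter_subset _ _)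
    _ ≤ ∑ s ∈ Finset.range (t + 1), (φ s).card := Finset.card_biUnion_le
    _ = ∑ s ∈ Finset.range t, (φ (s + 1)).card + (φ 0).card := Finset.sum_range_succ' _ _
    _ = ∑ s ∈ Finset.range t, (φ (s + 1)).card := by simp [hzero]
    _ ≤ ∑ _s ∈ Finset.range t, b := Finset.sum_le_sum (fun s _ => hcard (s + 1))
    _ = t * b := by simp [Finset.sum_const, mul_comm]
    _ = b * t := mul_comm _ _

lemma step (b : ℕ) (φ : ℕ → Finset (List (Fin (b + 1)))) (t : ℕ) :
    (b + 1) * (Bset b φ t).card + (Pset b φ t).card ≤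
      (Bset b φ (t + 1)).card + (Pset b φ (t + 1)).card := by
  set S := ((Bset b φ t) ×ˢ (Finset.univ : Finset (Fin (b + 1)))).image
      (fun p : List (Fin (b + 1)) × Fin (b + 1) => p.1 ++ [p.2]) with hS
  have hinj : Set.InjOn (fun p : List (Fin (b + 1)) × Fin (b + 1) => p.1 ++ [p.2])
      (↑((Bset b φ t) ×ˢ (Finset.univ : Finset (Fin (b + 1)))) : Set _) := by
    rintro ⟨v, i⟩ _ ⟨v', i'⟩ _ h
    obtain ⟨h1, h2⟩ := List.append_inj' h rfl
    simp only at h1 h2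
    simp [h1, List.cons_eq_cons.mp h2]
  have hScard : S.card = (b + 1) * (Bset b φ t).card := by
    rw [hS, Finset.card_image_of_injOn hinj, Finset.card_product]
    simp [mul_comm]
  have hrem : S.filter (fun w => ¬ w ∉ (Finset.range (t + 2)).biUnion φ) ⊆
      Pset b φ (t + 1) \ Pset b φ t := by
    intro w hw
    simp only [Finset.mem_filter, not_not, Finset.mem_biUnion, Finset.mem_range] at hw
    obtain ⟨hwS, t', ht', hwφ⟩ := hw
    have hwlen : w.length = t + 1 := by
      rw [hS] at hwS
      simp only [Finset.mem_image, Finset.mem_product] at hwS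
      obtain ⟨⟨v, i⟩, ⟨hv, _⟩, rfl⟩ := hwS
      simp [Bset_len b φ t v hv]
    simp only [Finset.mem_sdiff, Pset, Finset.mem_filter, Finset.mem_biUnion,
      Finset.mem_range]
    refine ⟨⟨⟨t', by omega, hwφ⟩, by omega⟩, ?_⟩
    rintro ⟨_, hle⟩
    omega
  have hsplit := Finset.card_filter_add_card_filter_not
      (s := S) (p := fun w => w ∉ (Finset.range (t + 2)).biUnion φ)
  have hB1 : (Bset b φ (t + 1)).card =
      (S.filter (fun w => w ∉ (Finset.range (t + 2)).biUnion φ)).card := by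
    rw [Bset, hS]
  have hremcard : (S.filter (fun w => ¬ w ∉ (Finset.range (t + 2)).biUnion φ)).card ≤
      (Pset b φ (t + 1)).card - (Pset b φ t).card := by
    calc _ ≤ (Pset b φ (t + 1) \ Pset b φ t).card := Finset.card_le_card hrem
      _ = _ := Finset.card_sdiff_of_subset (Pset_mono b φ t)
  have hmono : (Pset b φ t).card ≤ (Pset b φ (t + 1)).card :=
    Finset.card_le_card (Pset_mono b φ t)
  omega

lemma invariant (b : ℕ) (φ : ℕ → Finset (List (Fin (b + 1))))
    (hzero : φ 0 = ∅) (hcard : ∀ t, (φ t).card ≤ b) :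
    ∀ t, 1 + b * t ≤ (Bset b φ t).card + (Pset b φ t).card := by
  intro t
  induction t with
  | zero => simp [Bset]
  | succ t ih =>
    have hP := Pset_card b φ hzero hcard t
    have hB1 : 1 ≤ (Bset b φ t).card := by omega
    have hstep := step b φ t
    have hbig : (Bset b φ t).card + b ≤ (b + 1) * (Bset b φ t).card := by
      nlinarith [Nat.mul_le_mul_left b hB1]
    have hbt : b * (t + 1) = b * t + b := by ring
    omega

/-- With `b ≥ 1` firefighters per time step on the complete `(b+1)`-ary tree of height `h`
with fire starting at the root, any valid strategy (at most `b` protections per step, never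
protecting an already burned vertex) lets at least one leaf burn. -/
theorem stmt0 (b h : ℕ) (hb : 1 ≤ b) (φ : ℕ → Finset (List (Fin (b + 1))))
    (hzero : φ 0 = ∅)
    (hcard : ∀ t, (φ t).card ≤ b)
    (hnotburned : ∀ t v, v ∈ φ (t + 1) → v ∉ burnedTree b h φ t) :
    ∃ l : List (Fin (b + 1)), l.length = h ∧ ∃ t, l ∈ burnedTree b h φ t := by
  have hinv := invariant b φ hzero hcard h
  have hP := Pset_card b φ hzero hcard h
  have hB1 : 1 ≤ (Bset b φ h).card := by omega
  obtain ⟨w, hw⟩ := Finset.card_pos.mp hB1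
  exact ⟨w, Bset_len b φ h w hw, h, Bset_burned b h φ h le_rfl w hw⟩
end

section
/- Let b ≥ 1 and h ≥ 3. Define g_h = (h-1)(b+2) and opt_h = (h-2)(b+2) + ∑_{i=0}^{h-1} (b+1)^i. Then the ratio opt_h / g_h tends to infinity as h tends to infinity. -/
/-!
The optimum saves at least the `(b + 1) ^ (h - 1) ≥ 2 ^ (h - 1)` vertices of the last level,
which exceeds `(h - 1) ^ 2`, while the greedy strategy saves only `(h - 1)(b + 2)` vertices;
so the ratio is at least `(h - 1) / (b + 2)`.
-/

open Filter

theorem sq_le_two_pow {n : ℕ} (hn : 4 ≤ n) : n ^ 2 ≤ 2 ^ n := by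
  induction n, hn using Nat.le_induction with
  | base => norm_num
  | succ m hm ih =>
    calc (m + 1) ^ 2 = m ^ 2 + (2 * m + 1) := by ring
      _ ≤ 2 ^ m + 2 ^ m := by nlinarith
      _ = 2 ^ (m + 1) := by ring

theorem sq_le_geom_sum {q n : ℕ} (hq : 2 ≤ q) (hn : 4 ≤ n) :
    n ^ 2 ≤ ∑ i ∈ Finset.range (n + 1), q ^ i :=
  calc n ^ 2 ≤ 2 ^ n := sq_le_two_pow hn
    _ ≤ q ^ n := Nat.pow_le_pow_left hq n
    _ ≤ ∑ i ∈ Finset.range (n + 1), q ^ i :=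
      Finset.single_le_sum (fun _ _ ↦ Nat.zero_le _) (Finset.self_mem_range_succ n)

theorem tendsto_div_mul_atTop_of_sq_le {u : ℕ → ℕ} {c : ℕ} (hc : 0 < c)
    (hu : ∀ᶠ n in atTop, n ^ 2 ≤ u n) :
    Tendsto (fun n ↦ (u n : ℝ) / ((n * c : ℕ) : ℝ)) atTop atTop := by
  have hlin : Tendsto (fun n : ℕ ↦ (n : ℝ) / c) atTop atTop :=
    tendsto_natCast_atTop_atTop.atTop_div_const (by positivity)
  refine tendsto_atTop_mono' _ ?_ hlin
  filter_upwards [hu, eventually_gt_atTop 0] with n hn hpos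
  have hn' : ((n : ℝ) ^ 2) ≤ u n := by exact_mod_cast hn
  push_cast
  calc (n : ℝ) / c = (n : ℝ) ^ 2 / (n * c) := by field_simp
    _ ≤ u n / (n * c) := by gcongr

/-- For `b ≥ 1`, with `g_h = (h-1)(b+2)` (the number of vertices saved by the degree-greedy
strategy) and `opt_h = (h-2)(b+2) + ∑_{i=0}^{h-1} (b+1)^i` (the number saved by an optimal
strategy), the ratio `opt_h / g_h` tends to infinity as `h → ∞`. -/
theorem stmt4 (b : ℕ) (hb : 1 ≤ b) :
    Filter.Tendsto
      (fun h : ℕ =>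
        (((h - 2) * (b + 2) + ∑ i ∈ Finset.range h, (b + 1) ^ i : ℕ) : ℝ) /
          (((h - 1) * (b + 2) : ℕ) : ℝ))
      Filter.atTop Filter.atTop := by
  rw [← tendsto_add_atTop_iff_nat 1]
  simp only [Nat.add_sub_cancel]
  refine tendsto_div_mul_atTop_of_sq_le (by omega) ?_
  filter_upwards [eventually_ge_atTop 4] with n hn
  exact (sq_le_geom_sum (by omega) hn).trans (Nat.le_add_left _ _)
end
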